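/- arXiv:hep-th/0308121 — 2 statements merged into one kernel-verified Lean document; each statement's English description precedes it below -/
import Mathlib

section
/- Let s ∈ ℂ with −1 < Re(s) < 0. Then the function t ↦ (Σ_{n=0}^∞ 1/(1 + 2^n/t)) · t^{s-1} is integrable on (0, ∞), and ∫₀^∞ (Σ_{n=0}^∞ 1/(1 + 2^n/t)) t^{s-1} dt = (π / sin(π(s − 1))) · 1/(1 − 2^s), where 2^s = exp(s log 2) and sin denotes the complex sine. -/
open Real Filter Topology MeasureTheory Set
open scoped ENNReal

/-!
The conductance is the harmonic sum `∑ₙ k (2⁻ⁿ t)` of the single kernel `k t = 1 / (1 + t⁻¹)`,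
so its Mellin transform factors as `(∑ₙ 2^(n s)) · 𝓜k(s)`, a geometric series `1 / (1 - 2^s)`
times `𝓜k(s) = 𝓜[1 / (1 + v)](-s)`. The substitution `v = u / (1 - u)` turns the latter into
the Beta integral `B(-s, 1 + s) = Γ(-s) Γ(1 + s) = π / sin (-π s)`. Sum and integral may be
exchanged because `∫ |t ^ (s - 1) k (2⁻ⁿ t)| dt = 2^(n Re s) · ∫ t ^ (Re s - 1) k t dt` is
summable for `Re s < 0`.
-/

section TsumIntegrable

variable {α E ι : Type*} [MeasurableSpace α] {μ : Measure α} [NormedAddCommGroup E]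
  [CompleteSpace E] [Countable ι]

theorem integrable_tsum_of_summable_integral_norm {F : ι → α → E}
    (hF_int : ∀ i, Integrable (F i) μ) (hF_sum : Summable fun i ↦ ∫ a, ‖F i a‖ ∂μ) :
    Integrable (fun a ↦ ∑' i, F i a) μ := by
  have h_lintegral : ∫⁻ a, ∑' i, ‖F i a‖ₑ ∂μ ≠ ∞ := by
    rw [lintegral_tsum fun i ↦ (hF_int i).aestronglyMeasurable.enorm]
    simp_rw [← ofReal_integral_norm_eq_lintegral_enorm (hF_int _)]
    rw [← ENNReal.ofReal_tsum_of_nonneg (fun i ↦ integral_nonneg fun a ↦ norm_nonneg _) hF_sum]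
    exact ENNReal.ofReal_ne_top
  have h_summable : ∀ᵐ a ∂μ, Summable fun i ↦ F i a := by
    filter_upwards [ae_lt_top' (AEMeasurable.tsum fun i ↦
      (hF_int i).aestronglyMeasurable.enorm) h_lintegral] with a ha
    exact (ENNReal.tsum_coe_ne_top_iff_summable.1 ha.ne).of_nnnorm
  refine ⟨aestronglyMeasurable_of_tendsto_ae atTop (fun s ↦ ?_)
    (h_summable.mono fun a ha ↦ ha.hasSum), ?_⟩
  · exact Finset.aestronglyMeasurable_fun_sum s fun i _ ↦ (hF_int i).aestronglyMeasurable
  · exact (lintegral_mono fun a ↦ enorm_tsum_le_tsum_enorm).trans_lt h_lintegral.lt_top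

end TsumIntegrable

theorem integral_Ioi_rpow_mul_comp_mul_left (g : ℝ → ℝ) (r : ℝ) {a : ℝ} (ha : 0 < a) :
    ∫ t in Ioi 0, t ^ r * g (a * t) = a ^ (-r - 1) * ∫ t in Ioi 0, t ^ r * g t := by
  have h := integral_comp_mul_left_Ioi (fun t ↦ t ^ r * g t) 0 ha
  have h_factor : ∀ t ∈ Ioi (0 : ℝ), (a * t) ^ r * g (a * t) = a ^ r * (t ^ r * g (a * t)) :=
    fun t ht ↦ by rw [mul_rpow ha.le (le_of_lt ht), mul_assoc]
  rw [mul_zero, setIntegral_congr_fun measurableSet_Ioi h_factor, integral_const_mul,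
    smul_eq_mul] at h
  rw [rpow_sub ha, rpow_neg ha.le, rpow_one]
  field_simp at h ⊢
  linarith

section Mellin

variable {E : Type*} [NormedAddCommGroup E] [NormedSpace ℂ E]

theorem HasMellin.comp_inv {f : ℝ → E} {s : ℂ} {m : E} (hf : HasMellin f (-s) m) :
    HasMellin (fun t ↦ f t⁻¹) s m := by
  refine ⟨?_, (mellin_comp_inv f s).trans hf.2⟩
  have h := (MellinConvergent.comp_rpow (f := f) (s := s) (a := -1) (by norm_num)).2
    (by simpa only [Complex.ofReal_neg, Complex.ofReal_one, div_neg, div_one] using hf.1)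
  simpa only [rpow_neg_one] using h

variable [CompleteSpace E] {ι : Type*} [Countable ι]

theorem hasMellin_tsum {F : ι → ℝ → E} {s : ℂ} (hF : ∀ i, MellinConvergent (F i) s)
    (h_sum : Summable fun i ↦ ∫ t in Ioi (0 : ℝ), t ^ (s.re - 1) * ‖F i t‖) :
    HasMellin (fun t ↦ ∑' i, F i t) s (∑' i, mellin (F i) s) := by
  have h_norm (i : ι) : ∫ t in Ioi (0 : ℝ), ‖(t : ℂ) ^ (s - 1) • F i t‖ =
      ∫ t in Ioi (0 : ℝ), t ^ (s.re - 1) * ‖F i t‖ :=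
    setIntegral_congr_fun measurableSet_Ioi fun t ht ↦ by
      rw [norm_smul, Complex.norm_cpow_eq_rpow_re_of_pos ht, Complex.sub_re, Complex.one_re]
  simp_rw [← h_norm] at h_sum
  have h_smul : EqOn (fun t : ℝ ↦ (t : ℂ) ^ (s - 1) • ∑' i, F i t)
      (fun t ↦ ∑' i, (t : ℂ) ^ (s - 1) • F i t) (Ioi 0) :=
    fun t _ ↦ (tsum_const_smul'' _).symm
  refine ⟨?_, ?_⟩
  · exact IntegrableOn.congr_fun (integrable_tsum_of_summable_integral_norm hF h_sum)
      h_smul.symm measurableSet_Ioi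
  · rw [mellin, setIntegral_congr_fun measurableSet_Ioi h_smul]
    exact (integral_tsum_of_summable_integral_norm hF h_sum).symm

theorem hasMellin_tsum_comp_mul_left {f : ℝ → E} {s : ℂ} (hf : MellinConvergent f s)
    {a : ι → ℝ} (ha : ∀ i, 0 < a i) (h_sum : Summable fun i ↦ a i ^ (-s.re)) :
    HasMellin (fun t ↦ ∑' i, f (a i * t)) s ((∑' i, (a i : ℂ) ^ (-s)) • mellin f s) := by
  have h_sum' : Summable fun i ↦ (a i : ℂ) ^ (-s) :=
    .of_norm <| by simpa [Complex.norm_cpow_eq_rpow_re_of_pos (ha _)] using h_sum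
  have h := hasMellin_tsum (F := fun i t ↦ f (a i * t)) (s := s)
    (fun i ↦ (MellinConvergent.comp_mul_left (ha i)).2 hf) ?_
  · simpa only [mellin_comp_mul_left _ _ (ha _), h_sum'.tsum_smul_const] using h
  · simp_rw [integral_Ioi_rpow_mul_comp_mul_left (fun t ↦ ‖f t‖) _ (ha _)]
    rw [show -(s.re - 1) - 1 = -s.re by ring]
    exact h_sum.mul_right _

end Mellin

theorem image_div_one_sub_Ioo : (fun u : ℝ ↦ u / (1 - u)) '' Ioo 0 1 = Ioi 0 := by
  ext v
  simp only [mem_image, mem_Ioo, mem_Ioi]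
  constructor
  · rintro ⟨u, ⟨hu0, hu1⟩, rfl⟩
    exact div_pos hu0 (sub_pos.2 hu1)
  · intro hv
    refine ⟨v / (1 + v), ⟨by positivity, (div_lt_one (by positivity)).2 (by linarith)⟩, ?_⟩
    field_simp
    ring

theorem injOn_div_one_sub : InjOn (fun u : ℝ ↦ u / (1 - u)) (Iio 1) := by
  intro u hu w hw h
  have hu' : 1 - u ≠ 0 := (sub_pos.2 hu).ne'
  have hw' : 1 - w ≠ 0 := (sub_pos.2 hw).ne'
  simp only [div_eq_div_iff hu' hw'] at h
  linarith

theorem hasDerivAt_div_one_sub {u : ℝ} (hu : u ≠ 1) :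
    HasDerivAt (fun u : ℝ ↦ u / (1 - u)) ((1 - u) ^ 2)⁻¹ u := by
  have h : HasDerivAt (fun u : ℝ ↦ u / (1 - u)) ((1 * (1 - u) - u * (0 - 1)) / (1 - u) ^ 2) u :=
    (hasDerivAt_id u).div ((hasDerivAt_const u 1).sub (hasDerivAt_id u)) (sub_ne_zero.2 hu.symm)
  exact h.congr_deriv (by ring)

theorem abs_deriv_smul_comp_div_one_sub_eq_beta_integrand {u : ℝ} (hu : u ∈ Ioo 0 1) (z : ℂ) :
    |((1 - u) ^ 2)⁻¹| • (((u / (1 - u) : ℝ) : ℂ) ^ (z - 1) • ((1 / (1 + u / (1 - u)) : ℝ) : ℂ)) =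
      (u : ℂ) ^ (z - 1) * (1 - (u : ℂ)) ^ (1 - z - 1) := by
  obtain ⟨hu0, hu1⟩ := hu
  have hw : 0 < 1 - u := sub_pos.2 hu1
  have hw' : (1 - (u : ℂ)) ≠ 0 := by exact_mod_cast hw.ne'
  have h_pow : (1 - (u : ℂ)) ^ (1 - z - 1) = ((1 - (u : ℂ)) ^ (z - 1) * (1 - (u : ℂ)))⁻¹ := by
    rw [show 1 - z - 1 = -(z - 1 + 1) by ring, Complex.cpow_neg, Complex.cpow_add _ _ hw',
      Complex.cpow_one]
  have h_frac : 1 / (1 + u / (1 - u)) = 1 - u := by field_simp; ring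
  rw [abs_of_pos (by positivity), h_frac, h_pow, Complex.ofReal_div,
    Complex.div_cpow_ofReal_nonneg hu0.le hw.le, Complex.real_smul, smul_eq_mul]
  push_cast
  field_simp

theorem hasMellin_one_div_one_add {z : ℂ} (hz0 : 0 < z.re) (hz1 : z.re < 1) :
    HasMellin (fun v : ℝ ↦ ((1 / (1 + v) : ℝ) : ℂ)) z (π / Complex.sin (π * z)) := by
  have h_beta := Complex.betaIntegral_convergent hz0 (by simpa using hz1 : 0 < (1 - z).re)
  have h_deriv : ∀ u ∈ Ioo (0 : ℝ) 1,
      HasDerivWithinAt (fun u : ℝ ↦ u / (1 - u)) ((1 - u) ^ 2)⁻¹ (Ioo 0 1) u :=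
    fun u hu ↦ (hasDerivAt_div_one_sub hu.2.ne).hasDerivWithinAt
  have h_inj := injOn_div_one_sub.mono (Ioo_subset_Iio_self (a := 0))
  have h_eq : EqOn _ _ (Ioo (0 : ℝ) 1) := fun u hu ↦
    abs_deriv_smul_comp_div_one_sub_eq_beta_integrand hu z
  rw [HasMellin, MellinConvergent, mellin, ← image_div_one_sub_Ioo,
    integrableOn_image_iff_integrableOn_abs_deriv_smul measurableSet_Ioo h_deriv h_inj,
    integral_image_eq_integral_abs_deriv_smul measurableSet_Ioo h_deriv h_inj,
    setIntegral_congr_fun measurableSet_Ioo h_eq, integrableOn_congr_fun h_eq measurableSet_Ioo]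
  refine ⟨h_beta.1.mono_set Ioo_subset_Ioc_self, ?_⟩
  rw [← integral_Ioc_eq_integral_Ioo, ← intervalIntegral.integral_of_le zero_le_one,
    ← Complex.betaIntegral, Complex.betaIntegral_eq_Gamma_mul_div _ _ hz0 (by simpa using hz1),
    add_sub_cancel, Complex.Gamma_one, div_one, Complex.Gamma_mul_Gamma_one_sub]

/-- For `-1 < Re s < 0`, the Mellin transform of the conductance
`⟨g(t)⟩ = Σ_{n≥0} 1/(1 + 2ⁿ/t)` converges (the integrand is integrable on `(0,∞)`)
and equals `(π/sin(π(s-1))) · 1/(1 - 2^s)`, where `2^s = exp(s log 2)`. -/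
theorem stmt5 (s : ℂ) (h1 : -1 < s.re) (h2 : s.re < 0) :
    IntegrableOn (fun t : ℝ =>
      ((∑' n : ℕ, 1 / (1 + 2 ^ n / t) : ℝ) : ℂ) * (t : ℂ) ^ (s - 1))
      (Set.Ioi (0 : ℝ)) ∧
    ∫ t in Set.Ioi (0 : ℝ),
        ((∑' n : ℕ, 1 / (1 + 2 ^ n / t) : ℝ) : ℂ) * (t : ℂ) ^ (s - 1) =
      (π : ℂ) / Complex.sin ((π : ℂ) * (s - 1)) *
        (1 / (1 - Complex.exp (s * Real.log 2))) := by
  set z := Complex.exp (s * Real.log 2)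
  have hz : ‖z‖ < 1 := by
    rw [Complex.norm_exp, Complex.re_mul_ofReal, Real.exp_lt_one_iff]
    exact mul_neg_of_neg_of_pos h2 (log_pos one_lt_two)
  have h_scale (n : ℕ) : (((2 : ℝ)⁻¹ ^ n : ℝ) : ℂ) ^ (-s) = z ^ n := by
    rw [Complex.cpow_def_of_ne_zero (Complex.ofReal_ne_zero.2 (by positivity)),
      ← Complex.ofReal_log (by positivity), Real.log_pow, Real.log_inv, ← Complex.exp_nat_mul]
    push_cast
    ring_nf
  have h_sum : Summable fun n : ℕ ↦ ((2 : ℝ)⁻¹ ^ n) ^ (-s.re) :=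
    (summable_geometric_of_lt_one (norm_nonneg _) hz).congr fun n ↦ by
      rw [← norm_pow, ← h_scale, Complex.norm_cpow_eq_rpow_re_of_pos (by positivity),
        Complex.neg_re]
  have h_term : HasMellin (fun t : ℝ ↦ ((1 / (1 + t⁻¹) : ℝ) : ℂ)) s (π / Complex.sin (π * -s)) :=
    (hasMellin_one_div_one_add (by simpa using h2) (by simp; linarith)).comp_inv
  have h := hasMellin_tsum_comp_mul_left h_term.1 (fun n ↦ by positivity) h_sum
  have h_conductance (t : ℝ) : ((∑' n : ℕ, 1 / (1 + 2 ^ n / t) : ℝ) : ℂ) =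
      ∑' n : ℕ, ((1 / (1 + ((2 : ℝ)⁻¹ ^ n * t)⁻¹) : ℝ) : ℂ) := by
    rw [Complex.ofReal_tsum]
    simp only [mul_inv, inv_pow, inv_inv, div_eq_mul_inv]
  rw [h_term.2] at h
  simp only [HasMellin, MellinConvergent, mellin, smul_eq_mul, h_scale,
    tsum_geometric_of_norm_lt_one hz, ← h_conductance] at h
  refine ⟨by simpa only [mul_comm] using h.1, ?_⟩
  simp only [mul_comm _ ((_ : ℂ) ^ (s - 1)), h.2]
  rw [mul_sub_one, Complex.sin_sub_pi, mul_neg, Complex.sin_neg]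
  ring
end

section
/- Fix real q with 0 < q < 1 and s ∈ ℂ. Define F(t) = (1−q)^s · Σ_{r=0}^∞ ((s)_r / r!) · q^{t+r} / (1 − q^{t+r}) for complex t. Then for every t ∈ ℂ such that q^{t+r} ≠ 1 for all integers r ≥ 0 (equivalently, t ∉ {−r + 2πik/log q : r ∈ ℕ, k ∈ ℤ}), the series defining F(t) converges and F is complex differentiable (analytic) at t. Moreover F(t) = Σ_{n=1}^∞ q^{nt}/([n]_q)^s whenever Re(t) > 0; hence F is the analytic continuation of the two-variable q-deformed zeta function, with singularities only on the set {−r + 2πik/log q : r ∈ ℕ, k ∈ ℤ}. -/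
open Real Filter Topology

/-- The binomial-expanded form of the two-variable `q`-deformed zeta function:
`F q s t = (1-q)^s Σ_{r≥0} ((s)_r/r!) q^{t+r}/(1-q^{t+r})`. -/
noncomputable def qZetaCont (q : ℝ) (s : ℂ) (t : ℂ) : ℂ :=
  ((1 - q : ℝ) : ℂ) ^ s *
    ∑' r : ℕ, (∏ i ∈ Finset.range r, (s + (i : ℂ))) / (r.factorial : ℂ) *
      (Complex.exp ((t + (r : ℂ)) * (Real.log q : ℂ)) /
        (1 - Complex.exp ((t + (r : ℂ)) * (Real.log q : ℂ))))

/-!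
Expanding `q^{t+r}/(1-q^{t+r}) = Σ_{n≥1} q^{n(t+r)}` and swapping the two sums turns `F(t)` into
`Σ_{n≥1} q^{nt} (1-q)^s Σ_r ((s)_r/r!) q^{nr} = Σ_{n≥1} q^{nt} (1-q)^s / (1-q^n)^s` by the binomial
series; this is `f_q(s,t)`, and the double series converges absolutely when `Re t > 0`.

For arbitrary `t`, `|q^{t+r}|` decays like `q^r` while `(s)_r/r!` grows at most polynomially (the
binomial series has radius `1`), so beyond some `R` the terms are dominated by a summable sequence
uniformly on the half-plane `Re w > Re t - 1`. The tail is therefore holomorphic there, and the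
first `R` terms are holomorphic at `t` as long as their denominators `1 - q^{t+r}` do not vanish.
-/

open Finset

theorem ascPochhammer_eval_eq_prod_range {R : Type*} [CommSemiring R] (n : ℕ) (s : R) :
    (ascPochhammer R n).eval s = ∏ i ∈ range n, (s + i) := by
  induction n with
  | zero => simp
  | succ n ih => simp [ascPochhammer_succ_right, prod_range_succ, ih]

theorem prod_range_add_div_factorial_eq_multichoose (s : ℂ) (r : ℕ) :
    (∏ i ∈ range r, (s + i)) / (r.factorial : ℂ) = Ring.multichoose s r := by
  rw [div_eq_iff (Nat.cast_ne_zero.mpr r.factorial_ne_zero), mul_comm, ← nsmul_eq_mul,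
    Ring.factorial_nsmul_multichoose_eq_ascPochhammer, Polynomial.ascPochhammer_smeval_eq_eval,
    ascPochhammer_eval_eq_prod_range]

theorem hasFPowerSeriesOnBall_one_div_one_sub_cpow (s : ℂ) :
    HasFPowerSeriesOnBall (fun z ↦ 1 / (1 - z) ^ s)
      (.ofScalars ℂ (Ring.multichoose s ·)) 0 1 := by
  simpa only [Ring.multichoose_eq] using Complex.one_div_one_sub_cpow_hasFPowerSeriesOnBall_zero s

theorem hasSum_multichoose_mul_pow (s : ℂ) {z : ℂ} (hz : ‖z‖ < 1) :
    HasSum (fun r ↦ Ring.multichoose s r * z ^ r) (1 / (1 - z) ^ s) := by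
  simpa [FormalMultilinearSeries.ofScalars_apply_eq, mul_comm] using
    (hasFPowerSeriesOnBall_one_div_one_sub_cpow s).hasSum (y := z)
      (by rw [Metric.mem_eball, edist_zero_right, ← ofReal_norm, ENNReal.ofReal_lt_one]; exact hz)

theorem summable_norm_multichoose_mul_pow (s : ℂ) {ρ : ℝ} (h0 : 0 ≤ ρ) (h1 : ρ < 1) :
    Summable (fun r ↦ ‖Ring.multichoose s r‖ * ρ ^ r) := by
  lift ρ to NNReal using h0
  simpa [FormalMultilinearSeries.ofScalars_norm] using
    (FormalMultilinearSeries.ofScalars ℂ (Ring.multichoose s ·)).summable_norm_mul_pow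
      ((hasFPowerSeriesOnBall_one_div_one_sub_cpow s).r_le.trans_lt' (by exact_mod_cast h1))

noncomputable def qPow (q : ℝ) (t : ℂ) : ℂ := Complex.exp (t * Real.log q)

noncomputable def qZetaTerm (q : ℝ) (s t : ℂ) (r : ℕ) : ℂ :=
  Ring.multichoose s r * (qPow q (t + r) / (1 - qPow q (t + r)))

theorem qZetaCont_eq (q : ℝ) (s t : ℂ) :
    qZetaCont q s t = ((1 - q : ℝ) : ℂ) ^ s * ∑' r, qZetaTerm q s t r := by
  simp only [qZetaCont, qZetaTerm, qPow, prod_range_add_div_factorial_eq_multichoose]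

theorem norm_qPow (q : ℝ) (t : ℂ) : ‖qPow q t‖ = Real.exp (t.re * Real.log q) := by
  simp [qPow, Complex.norm_exp]

theorem qPow_add_natCast {q : ℝ} (hq0 : 0 < q) (t : ℂ) (r : ℕ) :
    qPow q (t + r) = qPow q t * q ^ r := by
  rw [qPow, qPow, add_mul, Complex.exp_add, Complex.exp_nat_mul, Complex.ofReal_log hq0.le,
    Complex.exp_log (Complex.ofReal_ne_zero.mpr hq0.ne')]

theorem norm_qPow_add_natCast_le {q : ℝ} (hq0 : 0 < q) (hq1 : q < 1) {σ : ℝ} {t : ℂ}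
    (hσ : σ ≤ t.re) (r : ℕ) : ‖qPow q (t + r)‖ ≤ Real.exp (σ * Real.log q) * q ^ r := by
  rw [qPow_add_natCast hq0, norm_mul, norm_qPow, norm_pow, Complex.norm_real,
    Real.norm_of_nonneg hq0.le]
  exact mul_le_mul_of_nonneg_right (Real.exp_le_exp.mpr
    (mul_le_mul_of_nonpos_right hσ (Real.log_neg hq0 hq1).le)) (by positivity)

theorem exists_norm_qPow_add_natCast_le_half {q : ℝ} (hq0 : 0 < q) (hq1 : q < 1) (σ : ℝ) :
    ∃ R : ℕ, ∀ r ≥ R, ∀ t : ℂ, σ ≤ t.re → ‖qPow q (t + r)‖ ≤ 1 / 2 := by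
  have hlim : Tendsto (fun r : ℕ ↦ Real.exp (σ * Real.log q) * q ^ r) atTop (𝓝 0) := by
    simpa using (tendsto_pow_atTop_nhds_zero_of_lt_one hq0.le hq1).const_mul
      (Real.exp (σ * Real.log q))
  obtain ⟨R, hR⟩ := eventually_atTop.mp (hlim.eventually_le_const (by norm_num : (0 : ℝ) < 1 / 2))
  exact ⟨R, fun r hr t ht ↦ (norm_qPow_add_natCast_le hq0 hq1 ht r).trans (hR r hr)⟩

theorem norm_div_one_sub_le {z : ℂ} (hz : ‖z‖ ≤ 1 / 2) : ‖z / (1 - z)‖ ≤ 2 * ‖z‖ := by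
  have h : 1 / 2 ≤ ‖1 - z‖ := by
    linarith [norm_sub_norm_le (1 : ℂ) z, norm_one (α := ℂ)]
  rw [norm_div, div_le_iff₀ (by linarith)]
  nlinarith [norm_nonneg z]

theorem norm_qZetaTerm_le {q : ℝ} (hq0 : 0 < q) (hq1 : q < 1) (s : ℂ) {σ : ℝ} {t : ℂ}
    (hσ : σ ≤ t.re) {r : ℕ} (hr : ‖qPow q (t + r)‖ ≤ 1 / 2) :
    ‖qZetaTerm q s t r‖ ≤ 2 * Real.exp (σ * Real.log q) * (‖Ring.multichoose s r‖ * q ^ r) := by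
  calc ‖qZetaTerm q s t r‖
      ≤ ‖Ring.multichoose s r‖ * (2 * (Real.exp (σ * Real.log q) * q ^ r)) := by
        rw [qZetaTerm, norm_mul]
        gcongr
        exact (norm_div_one_sub_le hr).trans
          (by gcongr; exact norm_qPow_add_natCast_le hq0 hq1 hσ r)
    _ = _ := by ring

theorem summable_qZetaTerm {q : ℝ} (hq0 : 0 < q) (hq1 : q < 1) (s t : ℂ) :
    Summable (qZetaTerm q s t) := by
  obtain ⟨R, hR⟩ := exists_norm_qPow_add_natCast_le_half hq0 hq1 t.re
  have hbound := (summable_norm_multichoose_mul_pow s hq0.le hq1).mul_left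
    (2 * Real.exp (t.re * Real.log q))
  exact (summable_nat_add_iff R).mp (Summable.of_norm_bounded ((summable_nat_add_iff R).mpr hbound)
    fun r ↦ norm_qZetaTerm_le hq0 hq1 s le_rfl (hR _ (Nat.le_add_left R r) t le_rfl))

theorem differentiableAt_qZetaTerm (q : ℝ) (s : ℂ) {t : ℂ} {r : ℕ} (h : qPow q (t + r) ≠ 1) :
    DifferentiableAt ℂ (fun w ↦ qZetaTerm q s w r) t := by
  have hpow : DifferentiableAt ℂ (fun w : ℂ ↦ qPow q (w + r)) t := by
    unfold qPow; fun_prop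
  exact (hpow.div (hpow.const_sub 1) (sub_ne_zero.mpr h.symm)).const_mul _

theorem differentiableOn_tsum_qZetaTerm_nat_add {q : ℝ} (hq0 : 0 < q) (hq1 : q < 1) (s : ℂ)
    {σ : ℝ} {R : ℕ} (hR : ∀ r ≥ R, ∀ t : ℂ, σ ≤ t.re → ‖qPow q (t + r)‖ ≤ 1 / 2) :
    DifferentiableOn ℂ (fun w ↦ ∑' r, qZetaTerm q s w (r + R)) {w | σ < w.re} := by
  have hhalf : ∀ r, ∀ w ∈ {w : ℂ | σ < w.re}, ‖qPow q (w + ↑(r + R))‖ ≤ 1 / 2 :=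
    fun r w hw ↦ hR _ (Nat.le_add_left R r) w (le_of_lt hw)
  refine Complex.differentiableOn_tsum_of_summable_norm
    ((summable_nat_add_iff R).mpr
      ((summable_norm_multichoose_mul_pow s hq0.le hq1).mul_left (2 * Real.exp (σ * Real.log q))))
    (fun r w hw ↦ ?_) (isOpen_lt continuous_const Complex.continuous_re)
    (fun r w hw ↦ norm_qZetaTerm_le hq0 hq1 s (le_of_lt hw) (hhalf r w hw))
  refine (differentiableAt_qZetaTerm q s fun h ↦ ?_).differentiableWithinAt
  have := hhalf r w hw
  rw [h, norm_one] at this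
  norm_num at this

theorem differentiableAt_qZetaCont {q : ℝ} (hq0 : 0 < q) (hq1 : q < 1) (s : ℂ) {t : ℂ}
    (h : ∀ r : ℕ, qPow q (t + r) ≠ 1) : DifferentiableAt ℂ (qZetaCont q s) t := by
  obtain ⟨R, hR⟩ := exists_norm_qPow_add_natCast_le_half hq0 hq1 (t.re - 1)
  have hsplit : qZetaCont q s = fun w ↦ ((1 - q : ℝ) : ℂ) ^ s *
      (∑ r ∈ range R, qZetaTerm q s w r + ∑' r, qZetaTerm q s w (r + R)) := by
    ext w
    rw [qZetaCont_eq, (summable_qZetaTerm hq0 hq1 s w).sum_add_tsum_nat_add]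
  have htail := (differentiableOn_tsum_qZetaTerm_nat_add hq0 hq1 s hR).differentiableAt
    ((isOpen_lt continuous_const Complex.continuous_re).mem_nhds (by simp : t.re - 1 < t.re))
  have hhead : DifferentiableAt ℂ (fun w ↦ ∑ r ∈ range R, qZetaTerm q s w r) t :=
    DifferentiableAt.fun_sum fun r _ ↦ differentiableAt_qZetaTerm q s (h r)
  rw [hsplit]
  exact (hhead.add htail).const_mul _

theorem qPow_eq_one_iff {q : ℝ} (hq0 : 0 < q) (hq1 : q < 1) (u : ℂ) :
    qPow q u = 1 ↔ ∃ k : ℤ, u = 2 * π * Complex.I * k / Real.log q := by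
  have hlog : (Real.log q : ℂ) ≠ 0 := Complex.ofReal_ne_zero.mpr (Real.log_neg hq0 hq1).ne
  rw [qPow, Complex.exp_eq_one_iff]
  refine exists_congr fun k ↦ ?_
  rw [eq_div_iff hlog]
  constructor <;> intro h <;> linear_combination h

theorem forall_qPow_add_natCast_ne_one_iff {q : ℝ} (hq0 : 0 < q) (hq1 : q < 1) (t : ℂ) :
    (∀ r : ℕ, qPow q (t + r) ≠ 1) ↔
      ∀ r : ℕ, ∀ k : ℤ, t ≠ -(r : ℂ) + 2 * π * Complex.I * k / Real.log q := by
  refine forall_congr' fun r ↦ ?_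
  simp only [ne_eq, qPow_eq_one_iff hq0 hq1, not_exists]
  refine forall_congr' fun k ↦ not_congr ?_
  constructor <;> intro h <;> linear_combination h

theorem norm_qPow_lt_one {q : ℝ} (hq0 : 0 < q) (hq1 : q < 1) {t : ℂ} (ht : 0 < t.re) :
    ‖qPow q t‖ < 1 := by
  rw [norm_qPow, Real.exp_lt_one_iff]
  exact mul_neg_of_pos_of_neg ht (Real.log_neg hq0 hq1)

theorem qPow_add_natCast_pow_succ {q : ℝ} (hq0 : 0 < q) (t : ℂ) (r n : ℕ) :
    qPow q (t + r) ^ (n + 1) = qPow q ((n + 1) * t) * ((q ^ (n + 1) : ℝ) : ℂ) ^ r := by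
  rw [qPow_add_natCast hq0, mul_pow, qPow, qPow, ← Complex.exp_nat_mul]
  push_cast
  ring_nf

theorem qZetaTerm_eq_tsum {q : ℝ} (hq0 : 0 < q) (hq1 : q < 1) (s : ℂ) {t : ℂ} (ht : 0 < t.re)
    (r : ℕ) : qZetaTerm q s t r = ∑' n : ℕ, Ring.multichoose s r * qPow q (t + r) ^ (n + 1) := by
  have hlt : ‖qPow q (t + r)‖ < 1 :=
    norm_qPow_lt_one hq0 hq1 (by simpa using add_pos_of_pos_of_nonneg ht r.cast_nonneg)
  rw [qZetaTerm, tsum_mul_left, ← geom_series_mul_shift _ hlt, tsum_geometric_of_norm_lt_one hlt,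
    div_eq_mul_inv]

theorem tsum_multichoose_mul_qPow_pow {q : ℝ} (hq0 : 0 < q) (hq1 : q < 1) (s t : ℂ) (n : ℕ) :
    ∑' r : ℕ, Ring.multichoose s r * qPow q (t + r) ^ (n + 1) =
      qPow q ((n + 1) * t) * (1 / (1 - ((q ^ (n + 1) : ℝ) : ℂ)) ^ s) := by
  have hy : ‖((q ^ (n + 1) : ℝ) : ℂ)‖ < 1 := by
    rw [Complex.norm_real, Real.norm_of_nonneg (by positivity)]
    exact pow_lt_one₀ hq0.le hq1 n.succ_ne_zero
  simp_rw [qPow_add_natCast_pow_succ hq0, mul_left_comm _ (qPow q _)]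
  rw [tsum_mul_left, (hasSum_multichoose_mul_pow s hy).tsum_eq]

theorem summable_multichoose_mul_qPow_pow {q : ℝ} (hq0 : 0 < q) (hq1 : q < 1) (s : ℂ) {t : ℂ}
    (ht : 0 < t.re) :
    Summable (Function.uncurry fun r n : ℕ ↦ Ring.multichoose s r * qPow q (t + r) ^ (n + 1)) := by
  have hA := norm_qPow_lt_one hq0 hq1 ht
  rw [norm_qPow] at hA
  set A := Real.exp (t.re * Real.log q)
  refine Summable.of_norm_bounded ((summable_norm_multichoose_mul_pow s hq0.le hq1).mul_of_nonneg
    ((summable_geometric_of_lt_one (by positivity) hA).mul_left A) (fun _ ↦ by positivity)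
    (fun _ ↦ by positivity)) fun ⟨r, n⟩ ↦ ?_
  calc ‖Ring.multichoose s r * qPow q (t + r) ^ (n + 1)‖
      ≤ ‖Ring.multichoose s r‖ * (A * q ^ r) ^ (n + 1) := by
        rw [norm_mul, norm_pow]
        gcongr
        exact norm_qPow_add_natCast_le hq0 hq1 le_rfl r
    _ = ‖Ring.multichoose s r‖ * (q ^ r) ^ (n + 1) * (A * A ^ n) := by ring
    _ ≤ ‖Ring.multichoose s r‖ * q ^ r * (A * A ^ n) := by
        gcongr
        exact pow_le_of_le_one (by positivity) (pow_le_one₀ hq0.le hq1.le) n.succ_ne_zero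

theorem ofReal_cpow_mul_div_ofReal_cpow {a b : ℝ} (ha : 0 < a) (hb : 0 < b) (s z : ℂ) :
    (b : ℂ) ^ s * (z * (1 / (a : ℂ) ^ s)) = z / ((a / b : ℝ) : ℂ) ^ s := by
  have hsa : (a : ℂ) ^ s ≠ 0 := by simp [Complex.cpow_eq_zero_iff, ha.ne']
  have hsb : (b : ℂ) ^ s ≠ 0 := by simp [Complex.cpow_eq_zero_iff, hb.ne']
  rw [Complex.ofReal_div, Complex.div_cpow_ofReal_nonneg ha.le hb.le]
  field_simp

theorem qZetaCont_eq_tsum {q : ℝ} (hq0 : 0 < q) (hq1 : q < 1) (s : ℂ) {t : ℂ} (ht : 0 < t.re) :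
    qZetaCont q s t =
      ∑' n : ℕ, qPow q ((n + 1) * t) / (((1 - q ^ (n + 1)) / (1 - q) : ℝ) : ℂ) ^ s := by
  rw [qZetaCont_eq, tsum_congr (qZetaTerm_eq_tsum hq0 hq1 s ht),
    ← (summable_multichoose_mul_qPow_pow hq0 hq1 s ht).tsum_comm,
    tsum_congr (tsum_multichoose_mul_qPow_pow hq0 hq1 s t), ← tsum_mul_left]
  refine tsum_congr fun n ↦ ?_
  have hy : 0 < 1 - q ^ (n + 1) := sub_pos.mpr (pow_lt_one₀ hq0.le hq1 n.succ_ne_zero)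
  rw [← ofReal_cpow_mul_div_ofReal_cpow hy (sub_pos.mpr hq1)]
  push_cast
  rfl

/-- For fixed real `0 < q < 1` and `s ∈ ℂ`, the function
`F(t) = (1-q)^s Σ_{r≥0} ((s)_r/r!) q^{t+r}/(1-q^{t+r})` is: defined (the series converges)
and complex differentiable at every `t` with `q^{t+r} ≠ 1` for all `r ∈ ℕ` — a condition
equivalent to `t ∉ {-r + 2πik/log q : r ∈ ℕ, k ∈ ℤ}` — and agrees with the two-variable
`q`-deformed zeta function `f_q(s,t) = Σ_{n≥1} q^{nt}/([n]_q)^s` whenever `Re t > 0`;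
hence `F` is its analytic continuation, with singularities only on that set. -/
theorem stmt9 (q : ℝ) (hq0 : 0 < q) (hq1 : q < 1) (s : ℂ) :
    (∀ t : ℂ, (∀ r : ℕ, Complex.exp ((t + (r : ℂ)) * (Real.log q : ℂ)) ≠ 1) →
      Summable (fun r : ℕ =>
        (∏ i ∈ Finset.range r, (s + (i : ℂ))) / (r.factorial : ℂ) *
          (Complex.exp ((t + (r : ℂ)) * (Real.log q : ℂ)) /
            (1 - Complex.exp ((t + (r : ℂ)) * (Real.log q : ℂ))))) ∧
      DifferentiableAt ℂ (qZetaCont q s) t) ∧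
    (∀ t : ℂ, (∀ r : ℕ, Complex.exp ((t + (r : ℂ)) * (Real.log q : ℂ)) ≠ 1) ↔
      (∀ r : ℕ, ∀ k : ℤ,
        t ≠ -(r : ℂ) + 2 * (π : ℂ) * Complex.I * (k : ℂ) / (Real.log q : ℂ))) ∧
    (∀ t : ℂ, 0 < t.re →
      qZetaCont q s t =
        ∑' n : ℕ, Complex.exp (((n : ℂ) + 1) * t * (Real.log q : ℂ)) /
          (((1 - q ^ (n + 1)) / (1 - q) : ℝ) : ℂ) ^ s) := by
  refine ⟨fun t ht ↦ ⟨?_, differentiableAt_qZetaCont hq0 hq1 s ht⟩,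
    forall_qPow_add_natCast_ne_one_iff hq0 hq1, fun t ht ↦ qZetaCont_eq_tsum hq0 hq1 s ht⟩
  simp only [prod_range_add_div_factorial_eq_multichoose]
  exact summable_qZetaTerm hq0 hq1 s t
end
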